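/- Let p be an odd prime, a ∈ {0,…,p-1}, s an integer, α = a + sp, and 0 ≤ k ≤ p-1. Then qbinom(α, k) ≡ q^{spk} qbinom(a, k) + Σ_{j=1}^{k} ([sp]_q / [j]_q) (-1)^{j-1} q^{-binom(j,2) - j(k-j)} qbinom(a, k-j) (mod Φ_p(q)²), as elements of ℤ[q, q^{-1}] (the difference divided by Φ_p(q)² lies in ℤ[q,q^{-1}] localized at polynomials coprime to Φ_p). -/

import Mathlib

open Polynomial Finset

/-- The variable `q` as a rational function over `ℚ`. -/
noncomputable def qv : RatFunc ℚ := RatFunc.X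

/-- The q-Pochhammer symbol `(x; t)_k = (1-x)(1-xt)⋯(1-xt^{k-1})`. -/
noncomputable def qPochAt (x t : RatFunc ℚ) (k : ℕ) : RatFunc ℚ :=
  ∏ i ∈ Finset.range k, (1 - x * t ^ i)

/-- The Gaussian binomial coefficient `[α choose k]_t = (t^{α-k+1}; t)_k / (t; t)_k`
with integer upper argument. -/
noncomputable def qbinomAt (t : RatFunc ℚ) (α : ℤ) (k : ℕ) : RatFunc ℚ :=
  (∏ i ∈ Finset.range k, (1 - t ^ (α - k + 1 + i))) /
    (∏ i ∈ Finset.range k, (1 - t ^ (i + 1)))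

/-- The Gaussian binomial coefficient in the variable `q`. -/
noncomputable def qbinom (α : ℤ) (k : ℕ) : RatFunc ℚ := qbinomAt qv α k

/-- The image of an integer polynomial in `RatFunc ℚ`. -/
noncomputable def toF (g : Polynomial ℤ) : RatFunc ℚ :=
  Polynomial.aeval (RatFunc.X : RatFunc ℚ) g

/-- `A ≡ B (mod Φ_n(q)^m)` in the localization of `ℤ[q]` at polynomials coprime
to `Φ_n`: there are `f g : ℤ[q]` with `Φ_n ∤ g` and `(A - B) * g = Φ_n^m * f`. -/
def modCong (n m : ℕ) (A B : RatFunc ℚ) : Prop :=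
  ∃ f g : Polynomial ℤ, ¬ (Polynomial.cyclotomic n ℤ ∣ g) ∧
    (A - B) * toF g = toF ((Polynomial.cyclotomic n ℤ) ^ m * f)

/-- The q-integer `[m]_q = (1-q^m)/(1-q)`. -/
noncomputable def qint (m : ℤ) : RatFunc ℚ := (1 - qv ^ m) / (1 - qv)

/-!
By the q-Chu–Vandermonde identity, `[a + sp, k] = ∑ⱼ q^{(sp-j)(k-j)} [sp, j] [a, k-j]`.
For `j ≥ 1` we have `[sp, j] = ([sp]/[j]) [sp-1, j-1]` with `[sp] ≡ 0 (mod Φ_p)`, so modulo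
`Φ_p²` the cofactor `q^{(sp-j)(k-j)} [sp-1, j-1]` is only needed modulo `Φ_p`; there `q^p ≡ 1`
turns it into `q^{-j(k-j)} (-1)^{j-1} q^{-binom(j,2)}`. All congruences live in the subring of
`ℚ(q)` of fractions with denominator prime to `Φ_p`, which contains `[j]⁻¹` and `[α, k]` for
`0 < j < p`, `k < p`.
-/

lemma Int.natCast_choose_two (n : ℕ) : ((n.choose 2 : ℕ) : ℤ) = n * (n - 1) / 2 := by
  rw [eq_comm, Int.ediv_eq_of_eq_mul_left two_ne_zero]
  rcases n with _ | n
  · simp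
  · have := Nat.div_two_mul_two_of_even (Nat.even_mul_pred_self (n + 1))
    rw [← Nat.choose_two_right, Nat.add_sub_cancel] at this
    have := congrArg (Nat.cast : ℕ → ℤ) this
    push_cast at this ⊢
    linear_combination -this

section toF

variable (f g : ℤ[X])

@[simp] lemma toF_zero : toF 0 = 0 := map_zero _
@[simp] lemma toF_one : toF 1 = 1 := map_one _
@[simp] lemma toF_X : toF X = qv := aeval_X _
@[simp] lemma toF_add : toF (f + g) = toF f + toF g := map_add _ f g
@[simp] lemma toF_mul : toF (f * g) = toF f * toF g := map_mul _ f g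
@[simp] lemma toF_neg : toF (-f) = -toF f := map_neg _ f
@[simp] lemma toF_sub : toF (f - g) = toF f - toF g := map_sub _ f g
@[simp] lemma toF_pow (n : ℕ) : toF (f ^ n) = toF f ^ n := map_pow _ f n

end toF

lemma toF_eq_algebraMap (g : ℤ[X]) :
    toF g = algebraMap ℚ[X] (RatFunc ℚ) (g.map (Int.castRingHom ℚ)) := by
  rw [toF, ← RatFunc.algebraMap_X, aeval_algebraMap_apply, aeval_def, Polynomial.map,
    RingHom.ext_int (algebraMap ℤ ℚ[X]) (C.comp (Int.castRingHom ℚ))]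

lemma toF_injective : Function.Injective toF := fun f g h =>
  Polynomial.map_injective _ (RingHom.injective_int _) <| RatFunc.algebraMap_injective ℚ <| by
    rwa [← toF_eq_algebraMap, ← toF_eq_algebraMap]

lemma toF_ne_zero {g : ℤ[X]} (hg : g ≠ 0) : toF g ≠ 0 := (toF_injective.ne_iff' toF_zero).mpr hg

lemma qv_ne_zero : qv ≠ 0 := RatFunc.X_ne_zero

lemma one_sub_qv_pow_ne_zero {n : ℕ} (hn : n ≠ 0) : 1 - qv ^ n ≠ 0 := by
  have h : (1 - X ^ n : ℤ[X]) ≠ 0 := by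
    rw [← neg_ne_zero, neg_sub]
    exact X_pow_sub_C_ne_zero (Nat.pos_of_ne_zero hn) 1
  simpa using toF_ne_zero h

lemma cyclotomic_not_dvd_one_sub_X_pow {p i : ℕ} (hi : 0 < i) (hip : i < p) :
    ¬ cyclotomic p ℤ ∣ 1 - X ^ i := by
  rintro ⟨c, hc⟩
  have hζ := Complex.isPrimitiveRoot_exp p (by omega)
  have hroot := (isRoot_cyclotomic_iff_charZero (by omega)).mpr hζ
  have hζi := congrArg (fun f : ℤ[X] => eval (Complex.exp (2 * Real.pi * Complex.I / p))
    (f.map (Int.castRingHom ℂ))) hc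
  simp only [Polynomial.map_sub, Polynomial.map_one, Polynomial.map_pow, map_X, Polynomial.map_mul,
    map_cyclotomic, eval_sub, eval_one, eval_pow, eval_X, eval_mul, hroot.eq_zero, zero_mul] at hζi
  have hpi := hζ.dvd_of_pow_eq_one i (by linear_combination -hζi)
  exact absurd (Nat.le_of_dvd hi hpi) (by omega)

lemma cyclotomic_not_dvd_X {p : ℕ} (hp : p.Prime) : ¬ cyclotomic p ℤ ∣ X := fun h =>
  (cyclotomic.irreducible hp.pos).not_isUnit <| isUnit_of_dvd_one <| by
    simpa using dvd_sub (h.pow hp.ne_zero) (cyclotomic.dvd_X_pow_sub_one p ℤ)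

def localSubring (π : ℤ[X]) [hπ : Fact (Prime π)] : Subring (RatFunc ℚ) where
  carrier := {A | ∃ f g : ℤ[X], ¬ π ∣ g ∧ A * toF g = toF f}
  one_mem' := ⟨1, 1, hπ.out.not_dvd_one, by rw [one_mul]⟩
  zero_mem' := ⟨0, 1, hπ.out.not_dvd_one, by simp⟩
  mul_mem' := by
    rintro A B ⟨f₁, g₁, hg₁, h₁⟩ ⟨f₂, g₂, hg₂, h₂⟩
    refine ⟨f₁ * f₂, g₁ * g₂, fun h => (hπ.out.dvd_or_dvd h).elim hg₁ hg₂, ?_⟩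
    simp only [toF_mul]
    linear_combination (A * toF g₁) * h₂ + toF f₂ * h₁
  add_mem' := by
    rintro A B ⟨f₁, g₁, hg₁, h₁⟩ ⟨f₂, g₂, hg₂, h₂⟩
    refine ⟨f₁ * g₂ + f₂ * g₁, g₁ * g₂, fun h => (hπ.out.dvd_or_dvd h).elim hg₁ hg₂, ?_⟩
    simp only [toF_mul, toF_add]
    linear_combination toF g₂ * h₁ + toF g₁ * h₂
  neg_mem' := by
    rintro A ⟨f, g, hg, h⟩
    exact ⟨-f, g, hg, by rw [toF_neg, neg_mul, h]⟩

section LocalSubring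

variable {π : ℤ[X]} [hπ : Fact (Prime π)]

lemma toF_mem_localSubring (f : ℤ[X]) : toF f ∈ localSubring π :=
  ⟨f, 1, hπ.out.not_dvd_one, by simp⟩

lemma inv_toF_mem_localSubring {g : ℤ[X]} (hg : ¬ π ∣ g) : (toF g)⁻¹ ∈ localSubring π := by
  have hg₀ : toF g ≠ 0 := toF_ne_zero fun h => hg (h ▸ dvd_zero π)
  exact ⟨1, g, hg, inv_mul_cancel₀ hg₀ |>.trans toF_one.symm⟩

end LocalSubring

lemma prod_one_sub_qv_pow_succ_ne_zero (k : ℕ) : ∏ i ∈ range k, (1 - qv ^ (i + 1)) ≠ 0 :=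
  prod_ne_zero_iff.mpr fun i _ => one_sub_qv_pow_ne_zero (by omega)

lemma qbinom_zero_right (α : ℤ) : qbinom α 0 = 1 := by simp [qbinom, qbinomAt]

lemma qbinom_succ_right_eq (α : ℤ) (k : ℕ) :
    qbinom α (k + 1) * (1 - qv ^ (k + 1)) = qbinom α k * (1 - qv ^ (α - k)) := by
  have := prod_one_sub_qv_pow_succ_ne_zero k
  have := one_sub_qv_pow_ne_zero (n := k + 1) (by omega)
  simp only [qbinom, qbinomAt, prod_range_succ' (fun i => 1 - qv ^ (α - ↑(k + 1) + 1 + i)),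
    prod_range_succ _ k]
  push_cast
  field_simp
  ring_nf

lemma qbinom_succ_right_eq_pred (α : ℤ) (k : ℕ) :
    qbinom α (k + 1) * (1 - qv ^ (k + 1)) = qbinom (α - 1) k * (1 - qv ^ α) := by
  have := prod_one_sub_qv_pow_succ_ne_zero k
  have := one_sub_qv_pow_ne_zero (n := k + 1) (by omega)
  simp only [qbinom, qbinomAt, prod_range_succ _ k]
  push_cast
  field_simp
  ring_nf

lemma qbinom_pascal (α : ℤ) (k : ℕ) :
    qbinom α (k + 1) = qbinom (α - 1) k + qv ^ (k + 1) * qbinom (α - 1) (k + 1) := by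
  have hpow : qv ^ (k + 1) * qv ^ (α - 1 - k) = qv ^ α := by
    rw [← zpow_natCast, ← zpow_add₀ qv_ne_zero]
    congr 1
    push_cast
    ring
  refine mul_right_cancel₀ (one_sub_qv_pow_ne_zero (n := k + 1) (by omega)) ?_
  linear_combination qbinom_succ_right_eq_pred α k -
    qv ^ (k + 1) * qbinom_succ_right_eq (α - 1) k + qbinom (α - 1) k * hpow

lemma qbinom_zero_left (k : ℕ) : qbinom 0 (k + 1) = 0 := by
  have h := qbinom_succ_right_eq_pred 0 k
  rw [zpow_zero, sub_self, mul_zero] at h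
  exact (mul_eq_zero.mp h).resolve_right (one_sub_qv_pow_ne_zero (n := k + 1) (by omega))

lemma qbinom_succ_eq_qint_div (α : ℤ) (k : ℕ) :
    qbinom α (k + 1) = qint α / qint (k + 1 : ℕ) * qbinom (α - 1) k := by
  have h := qbinom_succ_right_eq_pred α k
  have := one_sub_qv_pow_ne_zero (n := k + 1) (by omega)
  have : 1 - qv ≠ 0 := by simpa using one_sub_qv_pow_ne_zero one_ne_zero
  rw [qint, qint, zpow_natCast]
  field_simp
  linear_combination h

noncomputable def chuVandermondeSum (m n : ℤ) (k : ℕ) : RatFunc ℚ :=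
  ∑ j ∈ range (k + 1), qv ^ ((m - j) * ((k : ℤ) - j)) * qbinom m j * qbinom n (k - j)

lemma chuVandermondeSum_zero_left (n : ℤ) (k : ℕ) : chuVandermondeSum 0 n k = qbinom n k := by
  simp [chuVandermondeSum, sum_range_succ', qbinom_zero_left, qbinom_zero_right]

lemma chuVandermondeSum_succ (m n : ℤ) (k : ℕ) :
    chuVandermondeSum m n (k + 1) =
      chuVandermondeSum (m - 1) n k + qv ^ (k + 1) * chuVandermondeSum (m - 1) n (k + 1) := by
  rw [chuVandermondeSum, chuVandermondeSum, chuVandermondeSum, sum_range_succ',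
    sum_range_succ' _ (k + 1), mul_add, mul_sum, add_left_comm, ← add_assoc, ← sum_add_distrib]
  congr 1
  · refine sum_congr rfl fun j _ => ?_
    have hexp₁ : (m - ↑(j + 1)) * (↑(k + 1) - ↑(j + 1)) = (m - 1 - j) * ((k : ℤ) - j) := by
      push_cast
      ring
    have hexp₂ : qv ^ ((m - 1 - j) * ((k : ℤ) - j)) * qv ^ (j + 1) =
        qv ^ (k + 1) * qv ^ ((m - 1 - ↑(j + 1)) * (↑(k + 1) - ↑(j + 1))) := by
      simp only [← zpow_natCast, ← zpow_add₀ qv_ne_zero]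
      congr 1
      push_cast
      ring
    rw [qbinom_pascal, Nat.add_sub_add_right, hexp₁]
    linear_combination (qbinom (m - 1) (j + 1) * qbinom n (k - j)) * hexp₂
  · simp only [qbinom_zero_right, Nat.sub_zero, CharP.cast_eq_zero, sub_zero, mul_one]
    rw [← mul_assoc, ← zpow_natCast, ← zpow_add₀ qv_ne_zero]
    congr 2
    push_cast
    ring

theorem qbinom_add_eq_chuVandermondeSum (m n : ℤ) (k : ℕ) :
    qbinom (m + n) k = chuVandermondeSum m n k := by
  induction k generalizing m with
  | zero => simp [chuVandermondeSum, qbinom_zero_right]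
  | succ k ih =>
    have hshift : ∀ m : ℤ, chuVandermondeSum m n (k + 1) - qbinom (m + n) (k + 1) =
        qv ^ (k + 1) * (chuVandermondeSum (m - 1) n (k + 1) - qbinom (m - 1 + n) (k + 1)) := by
      intro m
      rw [chuVandermondeSum_succ, qbinom_pascal, ← ih, show m + n - 1 = m - 1 + n by ring]
      ring
    have hpow : qv ^ (k + 1) ≠ 0 := pow_ne_zero _ qv_ne_zero
    refine (sub_eq_zero.mp ?_).symm
    induction m using Int.induction_on with
    | zero => rw [chuVandermondeSum_zero_left, zero_add, sub_self]
    | succ i hi => rw [hshift, add_sub_cancel_right, hi, mul_zero]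
    | pred i hi =>
      have hi' := hshift (-i)
      rw [hi, eq_comm, mul_eq_zero] at hi'
      exact hi'.resolve_left hpow

section Cyclotomic

variable {p : ℕ} [hp : Fact p.Prime] {e e' : ℕ} {A B C D : RatFunc ℚ}

instance : Fact (Prime (cyclotomic p ℤ)) := ⟨(cyclotomic.irreducible hp.out.pos).prime⟩

local notation "𝓡" => localSubring (cyclotomic p ℤ)

lemma qv_mem : qv ∈ 𝓡 := by simpa using toF_mem_localSubring (π := cyclotomic p ℤ) X

lemma qv_zpow_mem (z : ℤ) : qv ^ z ∈ 𝓡 := by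
  have hinv : qv⁻¹ ∈ 𝓡 := by simpa using inv_toF_mem_localSubring (cyclotomic_not_dvd_X hp.out)
  obtain ⟨n, rfl | rfl⟩ := Int.eq_nat_or_neg z
  · rw [zpow_natCast]
    exact pow_mem qv_mem n
  · rw [zpow_neg, zpow_natCast, ← inv_pow]
    exact pow_mem hinv n

lemma inv_one_sub_qv_pow_mem {i : ℕ} (hi : 0 < i) (hip : i < p) : (1 - qv ^ i)⁻¹ ∈ 𝓡 := by
  simpa using inv_toF_mem_localSubring (cyclotomic_not_dvd_one_sub_X_pow hi hip)

lemma modCong_iff :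
    modCong p e A B ↔ ∃ r ∈ 𝓡, A - B = toF (cyclotomic p ℤ) ^ e * r := by
  constructor
  · rintro ⟨f, g, hg, h⟩
    have hg₀ : toF g ≠ 0 := toF_ne_zero (fun h => hg (h ▸ dvd_zero _))
    refine ⟨toF f * (toF g)⁻¹, mul_mem (toF_mem_localSubring f) (inv_toF_mem_localSubring hg), ?_⟩
    rw [← mul_assoc, eq_mul_inv_iff_mul_eq₀ hg₀, h, toF_mul, toF_pow]
  · rintro ⟨r, ⟨f, g, hg, h⟩, hAB⟩
    exact ⟨f, g, hg, by rw [hAB, mul_assoc, h, toF_mul, toF_pow]⟩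

lemma modCong.of_eq (h : A = B) : modCong p e A B :=
  modCong_iff.mpr ⟨0, zero_mem _, by rw [h, sub_self, mul_zero]⟩

lemma modCong.trans (h₁ : modCong p e A B) (h₂ : modCong p e B C) : modCong p e A C := by
  obtain ⟨r₁, hr₁, h₁⟩ := modCong_iff.mp h₁
  obtain ⟨r₂, hr₂, h₂⟩ := modCong_iff.mp h₂
  exact modCong_iff.mpr ⟨r₁ + r₂, add_mem hr₁ hr₂, by linear_combination h₁ + h₂⟩

lemma modCong.add (h₁ : modCong p e A B) (h₂ : modCong p e C D) :
    modCong p e (A + C) (B + D) := by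
  obtain ⟨r₁, hr₁, h₁⟩ := modCong_iff.mp h₁
  obtain ⟨r₂, hr₂, h₂⟩ := modCong_iff.mp h₂
  exact modCong_iff.mpr ⟨r₁ + r₂, add_mem hr₁ hr₂, by linear_combination h₁ + h₂⟩

lemma modCong.sub (h₁ : modCong p e A B) (h₂ : modCong p e C D) :
    modCong p e (A - C) (B - D) := by
  obtain ⟨r₁, hr₁, h₁⟩ := modCong_iff.mp h₁
  obtain ⟨r₂, hr₂, h₂⟩ := modCong_iff.mp h₂
  exact modCong_iff.mpr ⟨r₁ - r₂, sub_mem hr₁ hr₂, by linear_combination h₁ - h₂⟩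

lemma modCong.mul (h₁ : modCong p e A B) (h₂ : modCong p e C D) (hB : B ∈ 𝓡) (hC : C ∈ 𝓡) :
    modCong p e (A * C) (B * D) := by
  obtain ⟨r₁, hr₁, h₁⟩ := modCong_iff.mp h₁
  obtain ⟨r₂, hr₂, h₂⟩ := modCong_iff.mp h₂
  refine modCong_iff.mpr ⟨r₁ * C + B * r₂, add_mem (mul_mem hr₁ hC) (mul_mem hB hr₂), ?_⟩
  linear_combination C * h₁ + B * h₂

lemma modCong.mul_left_of_modCong_zero (h₁ : modCong p e A 0) (h₂ : modCong p e' B C) :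
    modCong p (e + e') (A * B) (A * C) := by
  obtain ⟨r₁, hr₁, h₁⟩ := modCong_iff.mp h₁
  obtain ⟨r₂, hr₂, h₂⟩ := modCong_iff.mp h₂
  refine modCong_iff.mpr ⟨r₁ * r₂, mul_mem hr₁ hr₂, ?_⟩
  rw [sub_zero] at h₁
  rw [← mul_sub, h₁, h₂, pow_add]
  ring

lemma modCong.sum {ι : Type*} {s : Finset ι} {f g : ι → RatFunc ℚ}
    (h : ∀ i ∈ s, modCong p e (f i) (g i)) : modCong p e (∑ i ∈ s, f i) (∑ i ∈ s, g i) := by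
  classical
  induction s using Finset.induction_on with
  | empty => exact .of_eq rfl
  | insert i s hi ih =>
    rw [sum_insert hi, sum_insert hi]
    exact (h i (mem_insert_self i s)).add (ih fun j hj => h j (mem_insert_of_mem hj))

lemma qbinom_mem (α : ℤ) {k : ℕ} (hk : k < p) : qbinom α k ∈ 𝓡 := by
  rw [qbinom, qbinomAt, div_eq_mul_inv, ← prod_inv_distrib]
  refine mul_mem (prod_mem fun i _ => sub_mem (one_mem _) (qv_zpow_mem _))
    (prod_mem fun i hi => inv_one_sub_qv_pow_mem (by omega) ?_)
  rw [mem_range] at hi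
  omega

lemma inv_qint_mem {j : ℕ} (hj : 0 < j) (hjp : j < p) : (qint j)⁻¹ ∈ 𝓡 := by
  rw [qint, inv_div, div_eq_mul_inv, zpow_natCast]
  exact mul_mem (sub_mem (one_mem _) qv_mem) (inv_one_sub_qv_pow_mem hj hjp)

lemma modCong_qv_zpow {c d : ℤ} (h : (p : ℤ) ∣ c - d) : modCong p 1 (qv ^ c) (qv ^ d) := by
  have key (n : ℕ) : ∃ f : ℤ[X], qv ^ (p * n) - 1 = toF (cyclotomic p ℤ) * toF f := by
    obtain ⟨f, hf⟩ := (cyclotomic.dvd_X_pow_sub_one p ℤ).trans <| by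
      simpa [← pow_mul] using sub_dvd_pow_sub_pow (X ^ p : ℤ[X]) 1 n
    exact ⟨f, by simpa using congrArg toF hf⟩
  obtain ⟨z, hz⟩ := h
  rw [modCong_iff, pow_one]
  obtain ⟨n, rfl | rfl⟩ := Int.eq_nat_or_neg z
  · obtain ⟨f, hf⟩ := key n
    refine ⟨qv ^ d * toF f, mul_mem (qv_zpow_mem d) (toF_mem_localSubring f), ?_⟩
    rw [show c = d + (p * n : ℕ) by push_cast; linarith, zpow_add₀ qv_ne_zero, zpow_natCast]
    linear_combination qv ^ d * hf
  · obtain ⟨f, hf⟩ := key n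
    refine ⟨-(qv ^ c * toF f), neg_mem (mul_mem (qv_zpow_mem c) (toF_mem_localSubring f)), ?_⟩
    rw [show d = c + (p * n : ℕ) by push_cast; linarith, zpow_add₀ qv_ne_zero, zpow_natCast]
    linear_combination -(qv ^ c * hf)

lemma qint_modCong_zero {m : ℤ} (hm : (p : ℤ) ∣ m) : modCong p 1 (qint m) 0 := by
  have h : modCong p 1 (1 - qv ^ m) 0 := by
    simpa using (modCong.of_eq rfl : modCong p 1 1 1).sub (modCong_qv_zpow (d := 0) (by simpa))
  have hinv : (1 - qv)⁻¹ ∈ 𝓡 := by simpa using inv_one_sub_qv_pow_mem one_pos hp.out.one_lt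
  simpa [qint, div_eq_mul_inv] using h.mul (.of_eq rfl) (zero_mem _) hinv

lemma qbinom_pred_modCong {m : ℤ} (hm : (p : ℤ) ∣ m) {k : ℕ} (hk : k < p) :
    modCong p 1 (qbinom (m - 1) k) ((-1) ^ k * qv ^ (-((k + 1).choose 2 : ℤ))) := by
  induction k with
  | zero => exact .of_eq (by simp [qbinom_zero_right])
  | succ k ih =>
    have hk₀ := one_sub_qv_pow_ne_zero (n := k + 1) (by omega)
    have hrec : qbinom (m - 1) (k + 1) =
        qbinom (m - 1) k * ((1 - qv ^ (m - 1 - k)) * (1 - qv ^ (k + 1))⁻¹) := by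
      rw [← mul_assoc, ← qbinom_succ_right_eq, mul_inv_cancel_right₀ hk₀]
    have hfactor : modCong p 1 ((1 - qv ^ (m - 1 - k)) * (1 - qv ^ (k + 1))⁻¹)
        (-qv ^ (-(k + 1 : ℤ))) := by
      have hinv : qv ^ (-(k + 1 : ℤ)) * qv ^ (k + 1) = 1 := by
        rw [← zpow_natCast, ← zpow_add₀ qv_ne_zero]
        simp
      have hshift : modCong p 1 (qv ^ (m - 1 - k)) (qv ^ (-(k + 1 : ℤ))) :=
        modCong_qv_zpow (by convert hm using 1; ring)
      refine (((modCong.of_eq rfl).sub hshift).mul (.of_eq rfl) (sub_mem (one_mem _)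
        (qv_zpow_mem _)) (inv_one_sub_qv_pow_mem (by omega) hk)).trans (.of_eq ?_)
      rw [mul_inv_eq_iff_eq_mul₀ hk₀]
      linear_combination -hinv
    have hchoose : -(((k + 1 + 1).choose 2 : ℕ) : ℤ) = -((k + 1).choose 2 : ℤ) + -(k + 1) := by
      rw [Nat.choose_succ_succ', Nat.choose_one_right]
      push_cast
      ring
    rw [hrec]
    refine ((ih (by omega)).mul hfactor
      (mul_mem (pow_mem (neg_mem (one_mem _)) _) (qv_zpow_mem _))
      (mul_mem (sub_mem (one_mem _) (qv_zpow_mem _)) (inv_one_sub_qv_pow_mem (by omega) hk))).trans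
      (.of_eq ?_)
    rw [hchoose, zpow_add₀ qv_ne_zero]
    ring

lemma chuVandermondeSum_term_modCong {m : ℤ} (hm : (p : ℤ) ∣ m) (n : ℤ) {j k : ℕ} (hj : 0 < j)
    (hjk : j ≤ k) (hk : k < p) :
    modCong p 2 (qv ^ ((m - j) * ((k : ℤ) - j)) * qbinom m j * qbinom n (k - j))
      (qint m / qint j * (-1) ^ (j - 1) * qv ^ (-(j.choose 2 : ℤ) - j * ((k : ℤ) - j)) *
        qbinom n (k - j)) := by
  obtain ⟨i, rfl⟩ : ∃ i, j = i + 1 := ⟨j - 1, by omega⟩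
  obtain ⟨t, ht⟩ := id hm
  have hpow : modCong p 1 (qv ^ ((m - ↑(i + 1)) * ((k : ℤ) - ↑(i + 1))))
      (qv ^ (-(↑(i + 1) * ((k : ℤ) - ↑(i + 1))))) :=
    modCong_qv_zpow ⟨t * ((k : ℤ) - ↑(i + 1)), by rw [ht]; ring⟩
  have hcofactor : modCong p 1 (qv ^ ((m - ↑(i + 1)) * ((k : ℤ) - ↑(i + 1))) * qbinom (m - 1) i)
      (qv ^ (-(↑(i + 1) * ((k : ℤ) - ↑(i + 1)))) * ((-1) ^ i * qv ^ (-((i + 1).choose 2 : ℤ)))) :=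
    hpow.mul (qbinom_pred_modCong hm (by omega)) (qv_zpow_mem _) (qbinom_mem _ (by omega))
  have hcofactor_mem : qv ^ (-(↑(i + 1) * ((k : ℤ) - ↑(i + 1)))) *
      ((-1) ^ i * qv ^ (-((i + 1).choose 2 : ℤ))) ∈ 𝓡 :=
    mul_mem (qv_zpow_mem _) (mul_mem (pow_mem (neg_mem (one_mem _)) _) (qv_zpow_mem _))
  have hrest := (((modCong.of_eq rfl).mul hcofactor (inv_qint_mem hj (by omega))
    (mul_mem (qv_zpow_mem _) (qbinom_mem _ (by omega)))).mul (.of_eq rfl)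
    (mul_mem (inv_qint_mem hj (by omega)) hcofactor_mem)
    (qbinom_mem n (k := k - (i + 1)) (by omega)))
  rw [qbinom_succ_eq_qint_div]
  convert (qint_modCong_zero hm).mul_left_of_modCong_zero hrest using 1
  · ring
  · rw [Nat.add_sub_cancel, sub_eq_add_neg _ ((↑(i + 1) : ℤ) * _), zpow_add₀ qv_ne_zero]
    ring

end Cyclotomic

theorem stmt14_general (p : ℕ) (hp : p.Prime) (a : ℕ) (s : ℤ) (k : ℕ) (hk : k ≤ p - 1) :
    modCong p 2
      (qbinom ((a : ℤ) + s * p) k)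
      (qv ^ (s * p * k) * qbinom a k +
        ∑ j ∈ Finset.Icc 1 k,
          (qint (s * p) / qint j) * (-1 : RatFunc ℚ) ^ (j - 1) *
            qv ^ (-((j : ℤ) * ((j : ℤ) - 1) / 2) - (j : ℤ) * ((k : ℤ) - j)) *
            qbinom a (k - j)) := by
  have : Fact p.Prime := ⟨hp⟩
  have hkp : k < p := Nat.lt_of_le_pred hp.pos hk
  rw [add_comm, qbinom_add_eq_chuVandermondeSum, chuVandermondeSum, range_eq_Ico,
    sum_eq_sum_Ico_succ_bot (by omega : 0 < k + 1), zero_add, Ico_add_one_right_eq_Icc]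
  refine (modCong.of_eq ?_).add (modCong.sum fun j hj => ?_)
  · simp [qbinom_zero_right]
  · rw [mem_Icc] at hj
    rw [← Int.natCast_choose_two]
    exact chuVandermondeSum_term_modCong (dvd_mul_left _ _) a hj.1 hj.2 hkp

/-- Key expansion lemma: for an odd prime `p`, `a ∈ {0,…,p-1}`, `s : ℤ`, `α = a + sp`,
and `k ≤ p-1`:
`[α,k]_q ≡ q^{spk}[a,k]_q + Σ_{j=1}^k ([sp]_q/[j]_q)(-1)^{j-1} q^{-binom(j,2)-j(k-j)} [a,k-j]_q
  (mod Φ_p(q)²)`. -/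
theorem stmt14 (p : ℕ) (hp : p.Prime) (hodd : Odd p) (a : ℕ) (ha : a ≤ p - 1)
    (s : ℤ) (k : ℕ) (hk : k ≤ p - 1) :
    modCong p 2
      (qbinom ((a : ℤ) + s * p) k)
      (qv ^ (s * p * k) * qbinom a k +
        ∑ j ∈ Finset.Icc 1 k,
          (qint (s * p) / qint j) * (-1 : RatFunc ℚ) ^ (j - 1) *
            qv ^ (-((j : ℤ) * ((j : ℤ) - 1) / 2) - (j : ℤ) * ((k : ℤ) - j)) *
            qbinom a (k - j)) :=
  stmt14_general p hp a s k hk
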